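/- With L, T, τ_z, δ and δ_z as above, if δ additionally satisfies the co-Jacobi identity (δ⊗1)δ - (1⊗δ)δ + (τ⊗1)(1⊗δ)δ = 0 (τ = flip of the first two tensor factors), then the translated co-Jacobi identity holds: (δ_{z₁-z₂}⊗1)δ_{z₂} - (1⊗δ_{z₂})δ_{z₁} + (τ⊗1)(1⊗δ_{z₁})δ_{z₂} = 0. -/

import Mathlib

/-!
The translation operators `τ_z = e^{zT}` form a one-parameter group, and since `δ` intertwines
`T` with `T ⊗ 1 + 1 ⊗ T`, it intertwines `τ_z` with `e^{z(T ⊗ 1 + 1 ⊗ T)} = τ_z ⊗ τ_z`. Hence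
`δ_{z₁-z₂} τ_{z₂} = (τ_{z₁} ⊗ τ_{z₂}) δ`, and each of the three terms of the translated identity
is `τ_{z₁} ⊗ τ_{z₂} ⊗ 1` applied to the corresponding term of the co-Jacobi identity for `δ`
(for the last term after commuting the permutation past it).
-/

open TensorProduct Finset Filter
open scoped Nat

theorem Finset.sum_range_diag_eq_sum_range_sum_range {A : Type*} [AddCommMonoid A]
    {f : ℕ → ℕ → A} {N P : ℕ} (hf : ∀ i j, N ≤ i ∨ N ≤ j → f i j = 0) (hP : 2 * N ≤ P) :
    ∑ m ∈ range P, ∑ i ∈ range (m + 1), f i (m - i) = ∑ i ∈ range N, ∑ j ∈ range N, f i j := by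
  rw [sum_range_diag_flip, eventually_constant_sum (N := N) _ (by omega)]
  · refine sum_congr rfl fun i hi => eventually_constant_sum (fun j hj => hf i j (.inr hj)) ?_
    rw [mem_range] at hi
    omega
  · exact fun i hi => sum_eq_zero fun j _ => hf i j (.inl hi)

theorem inv_factorial_mul_choose (k : Type*) [Field k] [CharZero k] {i m : ℕ} (h : i ≤ m) :
    (m ! : k)⁻¹ * m.choose i = (i ! : k)⁻¹ * ((m - i)! : k)⁻¹ := by
  have : (m ! : k) ≠ 0 := Nat.cast_ne_zero.2 m.factorial_ne_zero
  rw [Nat.cast_choose k h]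
  field_simp

namespace Module.End

variable {k M N : Type*} [Field k] [AddCommGroup M] [Module k M] [AddCommGroup N] [Module k N]

def truncExp (S : Module.End k M) (P : ℕ) : Module.End k M :=
  ∑ n ∈ range P, (n ! : k)⁻¹ • S ^ n

/-- `E = exp S`; for a locally nilpotent `S` the truncation order may depend on the vector. -/
def IsExpOf (S E : Module.End k M) : Prop :=
  ∀ x, ∀ᶠ P in atTop, E x = S.truncExp P x

theorem truncExp_apply (S : Module.End k M) (P : ℕ) (x : M) :
    S.truncExp P x = ∑ n ∈ range P, (n ! : k)⁻¹ • (S ^ n) x := by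
  simp [truncExp]

theorem truncExp_apply_eq_of_pow_apply_eq_zero {S : Module.End k M} {x : M} {N P : ℕ}
    (hx : (S ^ N) x = 0) (hP : N ≤ P) : S.truncExp P x = S.truncExp N x := by
  simp only [truncExp_apply]
  exact eventually_constant_sum (fun n hn => by rw [pow_map_zero_of_le hn hx, smul_zero]) hP

theorem truncExp_add_apply [CharZero k] {A B : Module.End k M} (hAB : Commute A B) (P : ℕ)
    (x : M) : (A + B).truncExp P x = ∑ m ∈ range P, ∑ i ∈ range (m + 1),
      ((i ! : k)⁻¹ * ((m - i)! : k)⁻¹) • (A ^ i) ((B ^ (m - i)) x) := by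
  rw [truncExp_apply]
  refine sum_congr rfl fun m _ => ?_
  rw [hAB.add_pow, LinearMap.sum_apply, smul_sum]
  refine sum_congr rfl fun i hi => ?_
  rw [← inv_factorial_mul_choose k (mem_range_succ_iff.1 hi), mul_smul, mul_apply, mul_apply,
    natCast_apply, map_nsmul, map_nsmul, Nat.cast_smul_eq_nsmul]

theorem comp_truncExp {f : M →ₗ[k] N} {A : Module.End k M} {B : Module.End k N}
    (h : B ∘ₗ f = f ∘ₗ A) (P : ℕ) : f ∘ₗ A.truncExp P = B.truncExp P ∘ₗ f := by
  ext x
  simp [truncExp_apply, ← LinearMap.comp_apply (B ^ _), commute_pow_left_of_commute h]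

theorem rTensor_truncExp (S : Module.End k M) (P : ℕ) :
    (S.truncExp P).rTensor N = truncExp (S.rTensor N) P := by
  simp only [truncExp, LinearMap.rTensor_pow, ← LinearMap.rTensor_smul]
  exact map_sum (LinearMap.rTensorHom N) _ _

theorem lTensor_truncExp (S : Module.End k M) (P : ℕ) :
    (S.truncExp P).lTensor N = truncExp (S.lTensor N) P := by
  simp only [truncExp, LinearMap.lTensor_pow, ← LinearMap.lTensor_smul]
  exact map_sum (LinearMap.lTensorHom N) _ _

theorem isExpOf_smul {T E : Module.End k M} {z : k} (hT : ∀ x, ∃ N, (T ^ N) x = 0)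
    (hE : ∀ x N, (T ^ N) x = 0 → E x = ∑ n ∈ range N, (z ^ n / n !) • (T ^ n) x) :
    IsExpOf (z • T) E := fun x => by
  obtain ⟨N, hN⟩ := hT x
  filter_upwards [eventually_ge_atTop N] with P hP
  rw [hE x P (pow_map_zero_of_le hP hN), truncExp_apply]
  simp [smul_pow, smul_smul, div_eq_inv_mul]

namespace IsExpOf

variable {S A B E F : Module.End k M}

theorem apply_eq_of_pow_apply_eq_zero (hE : IsExpOf S E) {x : M} {N : ℕ}
    (hx : (S ^ N) x = 0) : E x = S.truncExp N x := by
  obtain ⟨P, hP⟩ := ((hE x).and (eventually_ge_atTop N)).exists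
  rw [hP.1, truncExp_apply_eq_of_pow_apply_eq_zero hx hP.2]

theorem unique (hE : IsExpOf S E) (hF : IsExpOf S F) : E = F :=
  LinearMap.ext fun x => by
    obtain ⟨P, hPE, hPF⟩ := ((hE x).and (hF x)).exists
    rw [hPE, hPF]

theorem exists_pow_apply_eq_zero [CharZero k] (hE : IsExpOf S E) (x : M) :
    ∃ N, (S ^ N) x = 0 := by
  obtain ⟨P, hP, hP'⟩ :=
    ((hE x).and ((hE x).filter_mono (tendsto_add_atTop_nat 1))).exists
  have hP : (P ! : k)⁻¹ • (S ^ P) x = 0 := by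
    simpa [truncExp_apply, sum_range_succ] using hP.symm.trans hP'
  exact ⟨P, (smul_eq_zero.mp hP).resolve_left
    (inv_ne_zero (Nat.cast_ne_zero.2 P.factorial_ne_zero))⟩

/-- On a vector killed by `A ^ N` and `B ^ N` both sides are finite sums, and the identity is
their Cauchy product. -/
theorem mul [CharZero k] (hAB : Commute A B) (hE : IsExpOf A E) (hF : IsExpOf B F) :
    IsExpOf (A + B) (E * F) := by
  intro x
  obtain ⟨N₁, hN₁⟩ := hE.exists_pow_apply_eq_zero x
  obtain ⟨N₂, hN₂⟩ := hF.exists_pow_apply_eq_zero x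
  set N := max N₁ N₂
  have hvanish : ∀ i j, N ≤ i ∨ N ≤ j → (A ^ i) ((B ^ j) x) = 0 := by
    rintro i j (hi | hj)
    · rw [← mul_apply, (hAB.pow_pow i j).eq, mul_apply,
        pow_map_zero_of_le ((le_max_left _ _).trans hi) hN₁, map_zero]
    · rw [pow_map_zero_of_le ((le_max_right _ _).trans hj) hN₂, map_zero]
  have hEF : (E * F) x = ∑ i ∈ range N, ∑ j ∈ range N,
      ((i ! : k)⁻¹ * (j ! : k)⁻¹) • (A ^ i) ((B ^ j) x) := by
    rw [mul_apply, hF.apply_eq_of_pow_apply_eq_zero (pow_map_zero_of_le (le_max_right _ _) hN₂),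
      truncExp_apply, map_sum, sum_comm]
    refine sum_congr rfl fun j _ => ?_
    rw [map_smul, hE.apply_eq_of_pow_apply_eq_zero (hvanish N j (.inl le_rfl)), truncExp_apply,
      smul_sum]
    simp only [smul_smul, mul_comm]
  filter_upwards [eventually_ge_atTop (2 * N)] with P hP
  rw [hEF, truncExp_add_apply hAB, sum_range_diag_eq_sum_range_sum_range (N := N)
    (f := fun i j => ((i ! : k)⁻¹ * (j ! : k)⁻¹) • (A ^ i) ((B ^ j) x))
    (fun i j hij => by simp only [hvanish i j hij, smul_zero]) hP]

theorem mul_of_smul [CharZero k] {T : Module.End k M} {τ : k → Module.End k M}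
    (hτ : ∀ z, IsExpOf (z • T) (τ z)) (w z : k) : τ w * τ z = τ (w + z) := by
  have h := (hτ w).mul (((Commute.refl T).smul_left w).smul_right z) (hτ z)
  rw [← add_smul] at h
  exact h.unique (hτ (w + z))

theorem comp_eq_comp {B F : Module.End k N} {f : M →ₗ[k] N}
    (h : B ∘ₗ f = f ∘ₗ A) (hE : IsExpOf A E) (hF : IsExpOf B F) : f ∘ₗ E = F ∘ₗ f :=
  LinearMap.ext fun x => by
    obtain ⟨P, hPE, hPF⟩ := ((hE x).and (hF (f x))).exists
    rw [LinearMap.comp_apply, LinearMap.comp_apply, hPE, hPF, ← LinearMap.comp_apply,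
      comp_truncExp h, LinearMap.comp_apply]

theorem rTensor (hE : IsExpOf A E) : IsExpOf (A.rTensor N) (E.rTensor N) := by
  intro u
  induction u using TensorProduct.induction_on with
  | zero => exact .of_forall fun P => by simp
  | tmul a b =>
    exact (hE a).mono fun P hP => by
      rw [LinearMap.rTensor_tmul, hP, ← LinearMap.rTensor_tmul, rTensor_truncExp]
  | add u v hu hv => exact (hu.and hv).mono fun P h => by rw [map_add, map_add, h.1, h.2]

theorem lTensor (hE : IsExpOf A E) : IsExpOf (A.lTensor N) (E.lTensor N) := by
  intro u
  induction u using TensorProduct.induction_on with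
  | zero => exact .of_forall fun P => by simp
  | tmul a b =>
    exact (hE b).mono fun P hP => by
      rw [LinearMap.lTensor_tmul, hP, ← LinearMap.lTensor_tmul, lTensor_truncExp]
  | add u v hu hv => exact (hu.and hv).mono fun P h => by rw [map_add, map_add, h.1, h.2]

theorem map [CharZero k] {B F : Module.End k N} (hE : IsExpOf A E) (hF : IsExpOf B F) :
    IsExpOf (A.rTensor N + B.lTensor M) (TensorProduct.map E F) := by
  rw [← LinearMap.rTensor_comp_lTensor]
  exact hE.rTensor.mul ((LinearMap.rTensor_comp_lTensor _ _ _).trans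
    (LinearMap.lTensor_comp_rTensor _ _ _).symm) hF.lTensor

end IsExpOf

end Module.End

theorem TensorProduct.leftComm_map_map {R M N P Q S U : Type*} [CommSemiring R]
    [AddCommMonoid M] [AddCommMonoid N] [AddCommMonoid P] [AddCommMonoid Q] [AddCommMonoid S]
    [AddCommMonoid U] [Module R M] [Module R N] [Module R P] [Module R Q] [Module R S]
    [Module R U] (f : M →ₗ[R] Q) (g : N →ₗ[R] S) (h : P →ₗ[R] U) (t : M ⊗[R] (N ⊗[R] P)) :
    leftComm R Q S U (map f (map g h) t) = map g (map f h) (leftComm R M N P t) := by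
  induction t using TensorProduct.induction_on with
  | zero => simp
  | tmul a v =>
    induction v using TensorProduct.induction_on with
    | zero => simp
    | tmul b c => rfl
    | add v w hv hw => simp only [tmul_add, map_add, hv, hw]
  | add t s ht hs => simp only [map_add, ht, hs]

open Module.End

theorem translated_coJacobi_identity_general {k L : Type*} [Field k] [CharZero k]
    [LieRing L] [LieAlgebra k L]
    (T : L →ₗ[k] L)
    (hnil : ∀ x : L, ∃ N, (T ^ N) x = 0)
    (τ : k → L →ₗ[k] L)
    (hτ : ∀ (z : k) (x : L) (N : ℕ), (T ^ N) x = 0 →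
      τ z x = ∑ n ∈ Finset.range N, (z ^ n / (n.factorial : k)) • (T ^ n) x)
    (δ : L →ₗ[k] L ⊗[k] L)
    (hTδ : ∀ x : L, δ (T x)
      = TensorProduct.map T LinearMap.id (δ x) + TensorProduct.map LinearMap.id T (δ x))
    (σ : L ⊗[k] (L ⊗[k] L) →ₗ[k] L ⊗[k] (L ⊗[k] L))
    (hσ : ∀ a b c : L, σ (a ⊗ₜ[k] (b ⊗ₜ[k] c)) = b ⊗ₜ[k] (a ⊗ₜ[k] c))
    (hcoJ : ∀ x : L,
      (TensorProduct.assoc k L L L) (TensorProduct.map δ LinearMap.id (δ x))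
        - TensorProduct.map LinearMap.id δ (δ x)
        + σ (TensorProduct.map LinearMap.id δ (δ x)) = 0)
    (δz : k → L →ₗ[k] L ⊗[k] L)
    (hδz : ∀ (w : k) (x : L), δz w x = TensorProduct.map (τ w) LinearMap.id (δ x)) :
    ∀ (z₁ z₂ : k) (x : L),
      (TensorProduct.assoc k L L L) (TensorProduct.map (δz (z₁ - z₂)) LinearMap.id (δz z₂ x))
        - TensorProduct.map LinearMap.id (δz z₂) (δz z₁ x)
        + σ (TensorProduct.map LinearMap.id (δz z₁) (δz z₂ x)) = 0 := by
  intro z₁ z₂ x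
  have hexp (z : k) : IsExpOf (z • T) (τ z) := isExpOf_smul hnil (hτ z)
  have hδτ (w : k) : δ ∘ₗ τ w = map (τ w) (τ w) ∘ₗ δ :=
    (hexp w).comp_eq_comp (LinearMap.ext fun y => by
      simp [hTδ, LinearMap.rTensor, LinearMap.lTensor, map_smul_left, map_smul_right])
      ((hexp w).map (hexp w))
  have hδz' (w : k) : δz w = (τ w).rTensor L ∘ₗ δ := LinearMap.ext (hδz w)
  have hshift : δz (z₁ - z₂) ∘ₗ τ z₂ = map (τ z₁) (τ z₂) ∘ₗ δ := by
    rw [hδz', LinearMap.comp_assoc, hδτ, ← LinearMap.comp_assoc, LinearMap.rTensor_comp_map,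
      ← mul_eq_comp, IsExpOf.mul_of_smul hexp, sub_add_cancel]
  have hfirst : map (δz (z₁ - z₂)) LinearMap.id (δz z₂ x)
      = map (map (τ z₁) (τ z₂)) LinearMap.id (map δ LinearMap.id (δ x)) := by
    rw [hδz, TensorProduct.map_map, TensorProduct.map_map, hshift]
  have hsecond (w w' : k) : map LinearMap.id (δz w') (δz w x)
      = map (τ w) (map (τ w') LinearMap.id) (map LinearMap.id δ (δ x)) := by
    rw [hδz, TensorProduct.map_map, TensorProduct.map_map, hδz', LinearMap.id_comp,
      LinearMap.comp_id]
    rfl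
  have hσ' (t : L ⊗[k] (L ⊗[k] L)) : σ t = leftComm k L L L t :=
    LinearMap.congr_fun (ext_threefold' (h := (leftComm k L L L).toLinearMap) hσ) t
  rw [hfirst, hsecond, hsecond, ← map_map_assoc, hσ', leftComm_map_map, ← hσ', ← map_sub,
    ← map_add, hcoJ, map_zero]

/-- Let `δ : L → L ⊗ L` be a Lie cobracket (1-cocycle satisfying the
co-Jacobi identity `(δ⊗1)δ - (1⊗δ)δ + (τ⊗1)(1⊗δ)δ = 0`, with `τ` the flip of the first
two tensor factors) on a Lie algebra `L` over a characteristic-zero field, commuting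
with a locally nilpotent derivation `T` (`δT = (T⊗1+1⊗T)δ`).  With `τ_z := e^{zT}` and
`δ_z := (τ_z⊗1)δ`, the translated co-Jacobi identity holds:
`(δ_{z₁-z₂}⊗1)δ_{z₂} - (1⊗δ_{z₂})δ_{z₁} + (τ⊗1)(1⊗δ_{z₁})δ_{z₂} = 0`. -/
theorem translated_coJacobi_identity {k L : Type*} [Field k] [CharZero k]
    [LieRing L] [LieAlgebra k L]
    (T : L →ₗ[k] L)
    (hder : ∀ x y : L, T ⁅x, y⁆ = ⁅T x, y⁆ + ⁅x, T y⁆)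
    (hnil : ∀ x : L, ∃ N, (T ^ N) x = 0)
    (τ : k → L →ₗ[k] L)
    (hτ : ∀ (z : k) (x : L) (N : ℕ), (T ^ N) x = 0 →
      τ z x = ∑ n ∈ Finset.range N, (z ^ n / (n.factorial : k)) • (T ^ n) x)
    (δ : L →ₗ[k] L ⊗[k] L)
    (hcoc : ∀ x y : L, δ ⁅x, y⁆ = ⁅x, δ y⁆ - ⁅y, δ x⁆)
    (hTδ : ∀ x : L, δ (T x)
      = TensorProduct.map T LinearMap.id (δ x) + TensorProduct.map LinearMap.id T (δ x))
    (σ : L ⊗[k] (L ⊗[k] L) →ₗ[k] L ⊗[k] (L ⊗[k] L))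
    (hσ : ∀ a b c : L, σ (a ⊗ₜ[k] (b ⊗ₜ[k] c)) = b ⊗ₜ[k] (a ⊗ₜ[k] c))
    (hcoJ : ∀ x : L,
      (TensorProduct.assoc k L L L) (TensorProduct.map δ LinearMap.id (δ x))
        - TensorProduct.map LinearMap.id δ (δ x)
        + σ (TensorProduct.map LinearMap.id δ (δ x)) = 0)
    (δz : k → L →ₗ[k] L ⊗[k] L)
    (hδz : ∀ (w : k) (x : L), δz w x = TensorProduct.map (τ w) LinearMap.id (δ x)) :
    ∀ (z₁ z₂ : k) (x : L),
      (TensorProduct.assoc k L L L) (TensorProduct.map (δz (z₁ - z₂)) LinearMap.id (δz z₂ x))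
        - TensorProduct.map LinearMap.id (δz z₂) (δz z₁ x)
        + σ (TensorProduct.map LinearMap.id (δz z₁) (δz z₂ x)) = 0 :=
  translated_coJacobi_identity_general T hnil τ hτ δ hTδ σ hσ hcoJ δz hδz
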